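/- For all integers 1 ≤ p, q ≤ N, A* A = Δ* S(p,q) Δ, where Δ ∈ ℂ^{q×q} is the unitary diagonal matrix with entries Δ_{k,k} = exp(-iπ(k-1)(p-1)/N) for 1 ≤ k ≤ q. In particular, A* A is unitarily similar, via a diagonal unitary, to the real symmetric matrix S(p,q). -/

import Mathlib

open Matrix Complex

/-- The twiddle factor `ω = exp(2πi/N)`. -/
noncomputable def omegaN (N : ℕ) : ℂ := Complex.exp (2 * Real.pi * Complex.I / N)

/-- The `p × q` Fourier submatrix `A` with entries `A_{j,k} = ω^{-(j-1)(k-1)}`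
(indices here are 0-based). -/
noncomputable def fourierA (N p q : ℕ) : Matrix (Fin p) (Fin q) ℂ :=
  fun j k => omegaN N ^ (-(((j : ℕ) * (k : ℕ) : ℕ) : ℤ))

/-- The periodic prolate matrix `S(p,q) ∈ ℝ^{q×q}` with entries
`sin(pπ(j-k)/N)/sin(π(j-k)/N)` off the diagonal and `p` on the diagonal. -/
noncomputable def prolateS (N p q : ℕ) : Matrix (Fin q) (Fin q) ℝ :=
  fun j k => if j = k then (p : ℝ)
    else Real.sin ((p : ℝ) * Real.pi * (((j : ℕ) : ℝ) - ((k : ℕ) : ℝ)) / N) /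
         Real.sin (Real.pi * (((j : ℕ) : ℝ) - ((k : ℕ) : ℝ)) / N)

/-- The unitary diagonal matrix `Δ ∈ ℂ^{q×q}` with entries
`Δ_{k,k} = exp(-iπ(k-1)(p-1)/N)` (0-based: `exp(-iπ k (p-1)/N)`). -/
noncomputable def deltaQ (N p q : ℕ) : Matrix (Fin q) (Fin q) ℂ :=
  Matrix.diagonal fun k =>
    Complex.exp (-(Real.pi : ℂ) * Complex.I * ((k : ℕ) : ℂ) * ((p : ℂ) - 1) / (N : ℂ))

/-! The `(j, k)` entry of `Aᴴ A` is the geometric sum `∑_{x < p} e^{2iax}` with `a = π (j - k) / N`.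
For `j ≠ k` we have `0 < |j - k| < N`, so `sin a ≠ 0` and the sum is the Dirichlet kernel
`e^{i(p-1)a} sin(pa) / sin a`; conjugating by `Δ` contributes exactly the phase `e^{i(p-1)a}`. -/

open Finset
open scoped Real

lemma star_exp_ofReal_mul_I (θ : ℝ) : star (exp (θ * I)) = exp (-θ * I) := by
  rw [Complex.star_def, ← Complex.exp_conj]
  simp

lemma star_exp_ofReal_mul_I_mul_self (θ : ℝ) : star (exp (θ * I)) * exp (θ * I) = 1 := by
  rw [star_exp_ofReal_mul_I, ← Complex.exp_add, neg_mul, neg_add_cancel, Complex.exp_zero]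

lemma Real.sin_pi_mul_div_ne_zero {x y : ℝ} (hx : x ≠ 0) (hxy : |x| < y) :
    Real.sin (π * x / y) ≠ 0 := by
  have hy : 0 < y := (abs_pos.mpr hx).trans hxy
  have hxy' : |x / y| < 1 := by rwa [abs_div, abs_of_pos hy, div_lt_one hy]
  obtain ⟨h₁, h₂⟩ := abs_lt.mp hxy'
  rw [mul_div_assoc, Ne, Real.sin_eq_zero_iff_of_lt_of_lt (by nlinarith [Real.pi_pos])
    (by nlinarith [Real.pi_pos])]
  exact mul_ne_zero Real.pi_ne_zero (div_ne_zero hx hy.ne')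

lemma exp_two_mul_I_sub_one (a : ℂ) : exp (2 * a * I) - 1 = exp (a * I) * (2 * I * sin a) := by
  rw [Complex.sin, show 2 * a * I = a * I + a * I by ring, Complex.exp_add]
  have : exp (a * I) * exp (-a * I) = 1 := by rw [← Complex.exp_add]; simp
  linear_combination (-exp (a * I) * exp (-a * I) + exp (a * I) ^ 2) * I_sq + this

lemma sum_range_exp_two_mul_I_pow {a : ℂ} (ha : sin a ≠ 0) (p : ℕ) :
    ∑ x ∈ range p, exp (2 * a * I) ^ x = exp ((p - 1) * a * I) * (sin (p * a) / sin a) := by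
  have hsub : exp (2 * a * I) - 1 ≠ 0 := by
    rw [exp_two_mul_I_sub_one]
    exact mul_ne_zero (Complex.exp_ne_zero _) (mul_ne_zero (by simp) ha)
  rw [geom_sum_eq (sub_ne_zero.mp hsub), ← Complex.exp_nat_mul,
    show (p : ℂ) * (2 * a * I) = 2 * (p * a) * I by ring, exp_two_mul_I_sub_one,
    exp_two_mul_I_sub_one, show (p : ℂ) * a * I = (p - 1) * a * I + a * I by ring, Complex.exp_add]
  field_simp

section

variable {n : Type*} [Fintype n] [DecidableEq n] (θ : n → ℝ)

lemma conjTranspose_diagonal_exp_mul_self :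
    (diagonal fun k => exp (θ k * I))ᴴ * diagonal (fun k => exp (θ k * I)) = 1 := by
  rw [diagonal_conjTranspose, diagonal_mul_diagonal, ← diagonal_one]
  exact congrArg diagonal (funext fun k => star_exp_ofReal_mul_I_mul_self (θ k))

lemma conjTranspose_diagonal_exp_mul_mul_diagonal_exp_apply (M : Matrix n n ℂ) (j k : n) :
    ((diagonal fun k => exp (θ k * I))ᴴ * M * diagonal fun k => exp (θ k * I)) j k =
      exp ((θ k - θ j) * I) * M j k := by
  rw [diagonal_conjTranspose, mul_diagonal, diagonal_mul, Pi.star_apply, star_exp_ofReal_mul_I,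
    mul_right_comm, ← Complex.exp_add]
  ring_nf

end

lemma fourierA_apply (N p q : ℕ) (j : Fin p) (k : Fin q) :
    fourierA N p q j k = exp (↑(-2 * π * (j : ℕ) * (k : ℕ) / N) * I) := by
  rw [fourierA, omegaN, ← Complex.exp_int_mul]
  push_cast
  ring_nf

lemma deltaQ_eq_diagonal (N p q : ℕ) :
    deltaQ N p q = diagonal fun k : Fin q => exp (↑(-π * (k : ℕ) * ((p : ℝ) - 1) / N) * I) := by
  refine congrArg diagonal (funext fun k => congrArg exp ?_)
  push_cast
  ring

lemma conjTranspose_fourierA_mul_fourierA_apply (N p q : ℕ) (j k : Fin q) :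
    ((fourierA N p q)ᴴ * fourierA N p q) j k =
      ∑ x ∈ range p, exp (2 * ↑(π * (((j : ℕ) : ℝ) - ((k : ℕ) : ℝ)) / N) * I) ^ x := by
  rw [mul_apply, ← Fin.sum_univ_eq_sum_range]
  refine Finset.sum_congr rfl fun x _ => ?_
  rw [conjTranspose_apply, fourierA_apply, fourierA_apply, star_exp_ofReal_mul_I,
    ← Complex.exp_add, ← Complex.exp_nat_mul]
  push_cast
  ring_nf

theorem conjTranspose_fourierA_mul_fourierA_general
    (N p q : ℕ) (hqN : q ≤ N) :
    (deltaQ N p q)ᴴ * deltaQ N p q = 1 ∧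
    (fourierA N p q)ᴴ * fourierA N p q =
      (deltaQ N p q)ᴴ * (prolateS N p q).map (Complex.ofReal) * deltaQ N p q := by
  rw [deltaQ_eq_diagonal]
  refine ⟨conjTranspose_diagonal_exp_mul_self _, ?_⟩
  ext j k
  rw [conjTranspose_fourierA_mul_fourierA_apply,
    conjTranspose_diagonal_exp_mul_mul_diagonal_exp_apply, map_apply]
  rcases eq_or_ne j k with rfl | hjk
  · simp [prolateS]
  set d : ℝ := ((j : ℕ) : ℝ) - ((k : ℕ) : ℝ)
  have hd : d ≠ 0 := sub_ne_zero.mpr (by exact_mod_cast Fin.val_ne_of_ne hjk)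
  have hdN : |d| < N := abs_sub_lt_of_nonneg_of_lt (Nat.cast_nonneg _)
    (by exact_mod_cast j.isLt.trans_le hqN) (Nat.cast_nonneg _)
    (by exact_mod_cast k.isLt.trans_le hqN)
  have hsin : sin ↑(π * d / N) ≠ 0 := by
    exact_mod_cast Real.sin_pi_mul_div_ne_zero hd hdN
  rw [sum_range_exp_two_mul_I_pow hsin, prolateS, if_neg hjk]
  push_cast [d]
  ring_nf

theorem conjTranspose_fourierA_mul_fourierA
    (N p q : ℕ) (hN : 0 < N) (hp1 : 1 ≤ p) (hpN : p ≤ N) (hq1 : 1 ≤ q) (hqN : q ≤ N) :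
    (deltaQ N p q)ᴴ * deltaQ N p q = 1 ∧
    (fourierA N p q)ᴴ * fourierA N p q =
      (deltaQ N p q)ᴴ * (prolateS N p q).map (Complex.ofReal) * deltaQ N p q :=
  conjTranspose_fourierA_mul_fourierA_general N p q hqN
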